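/- arXiv:1105.0845 — 9 statements merged into one kernel-verified Lean document; each statement's English description precedes it below -/
import Mathlib

section
/- Let F=(W,R) be a reflexive frame satisfying φ~_eq and φ_1-step: for all x,y₁,y₂,y₃, if xRy₁∧xRy₂∧xRy₃ then (x~yᵢ for some i) or (yᵢ~yⱼ for some i<j). Then in the abstraction F/~, each world [w] has at most two direct successors distinct from [w] itself. -/
/-- `sim R x y` (written `x ~ y` in the paper) means there is a symmetric edge
between `x` and `y`. -/
def sim {W : Type} (R : W → W → Prop) (x y : W) : Prop := R x y ∧ R y x

/-- Let `(W, R)` be a reflexive frame satisfying `φ~_eq` and `φ_1-step`.  Then in the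
abstraction `F/~`, each world `[w]` has at most two direct successors distinct
from `[w]` itself. -/
theorem abstraction_at_most_two_successors {W : Type} (R : W → W → Prop)
    (hrefl : ∀ x, R x x)
    (heq : ∀ x y z : W,
      (sim R x y ∧ R y z → R x z) ∧ (sim R x y ∧ R z y → R z x))
    (h1step : ∀ x y₁ y₂ y₃ : W, R x y₁ → R x y₂ → R x y₃ →
      sim R x y₁ ∨ sim R x y₂ ∨ sim R x y₃ ∨
      sim R y₁ y₂ ∨ sim R y₁ y₃ ∨ sim R y₂ y₃)
    -- the quotient by `~`:
    (s : Setoid W) (hs : ∀ x y, s.r x y ↔ sim R x y)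
    -- the (well-defined) quotient relation `R/~`:
    (Rq : Quotient s → Quotient s → Prop)
    (hRq : ∀ w w' : W, Rq (Quotient.mk s w) (Quotient.mk s w') ↔ R w w') :
    ∀ q q₁ q₂ q₃ : Quotient s,
      Rq q q₁ → Rq q q₂ → Rq q q₃ → q₁ ≠ q → q₂ ≠ q → q₃ ≠ q →
      q₁ = q₂ ∨ q₁ = q₃ ∨ q₂ = q₃ := by
  intro q q₁ q₂ q₃ h1 h2 h3 hn1 hn2 hn3
  induction q using Quotient.inductionOn with | _ x =>
  induction q₁ using Quotient.inductionOn with | _ y₁ =>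
  induction q₂ using Quotient.inductionOn with | _ y₂ =>
  induction q₃ using Quotient.inductionOn with | _ y₃ =>
  have r1 := (hRq x y₁).mp h1
  have r2 := (hRq x y₂).mp h2
  have r3 := (hRq x y₃).mp h3
  have key : ∀ a b : W, sim R a b → Quotient.mk s a = Quotient.mk s b := by
    intro a b hab
    exact Quotient.sound ((hs a b).mpr hab)
  rcases h1step x y₁ y₂ y₃ r1 r2 r3 with h|h|h|h|h|h
  · exact absurd (key x y₁ h).symm hn1
  · exact absurd (key x y₂ h).symm hn2
  · exact absurd (key x y₃ h).symm hn3
  · exact Or.inl (key y₁ y₂ h)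
  · exact Or.inr (Or.inl (key y₁ y₃ h))
  · exact Or.inr (Or.inr (key y₂ y₃ h))
end

section
/- Let F=(W,R) be a reflexive frame satisfying φ~_eq and φ_2-step: for all x,y₁,...,y₄,z₁,...,z₄, if xRyᵢ and yᵢRzᵢ for all i∈{1,...,4}, then (x~yᵢ for some i) or (yᵢ~zᵢ for some i) or (zᵢ~zⱼ for some i<j). Then in the abstraction F/~, for each world [w], there are at most three equivalence classes reachable from [w] by a path of length two that uses no reflexive edge (i.e., classes [z] such that there is [y] with [w] R/~ [y], [y] R/~ [z], [y]≠[w], [y]≠[z]). -/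
/-- Let `(W, R)` be a reflexive frame satisfying `φ~_eq` and `φ_2-step`.  Then in the
abstraction `F/~`, from each world `[w]` at most three equivalence classes are
reachable by a path of length two that uses no reflexive edge: among any four
such target classes (with their intermediate classes), two coincide. -/
theorem abstraction_at_most_three_two_step_successors {W : Type} (R : W → W → Prop)
    (hrefl : ∀ x, R x x)
    (heq : ∀ x y z : W,
      (sim R x y ∧ R y z → R x z) ∧ (sim R x y ∧ R z y → R z x))
    (h2step : ∀ (x : W) (y z : Fin 4 → W),
      (∀ i, R x (y i) ∧ R (y i) (z i)) →
      (∃ i, sim R x (y i)) ∨ (∃ i, sim R (y i) (z i)) ∨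
      (∃ i j, i < j ∧ sim R (z i) (z j)))
    -- the quotient by `~`:
    (s : Setoid W) (hs : ∀ x y, s.r x y ↔ sim R x y)
    -- the (well-defined) quotient relation `R/~`:
    (Rq : Quotient s → Quotient s → Prop)
    (hRq : ∀ w w' : W, Rq (Quotient.mk s w) (Quotient.mk s w') ↔ R w w') :
    ∀ (q : Quotient s) (y z : Fin 4 → Quotient s),
      (∀ i, Rq q (y i) ∧ Rq (y i) (z i) ∧ y i ≠ q ∧ y i ≠ z i) →
      ∃ i j, i < j ∧ z i = z j := by
  intro q y z h
  obtain ⟨w, rfl⟩ := Quotient.exists_rep q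
  choose ya hya using fun i => Quotient.exists_rep (y i)
  choose za hza using fun i => Quotient.exists_rep (z i)
  have hR : ∀ i, R w (ya i) ∧ R (ya i) (za i) := by
    intro i
    have h1 := (h i).1
    have h2 := (h i).2.1
    rw [← hya i] at h1 h2
    rw [← hza i] at h2
    exact ⟨(hRq w (ya i)).1 h1, (hRq (ya i) (za i)).1 h2⟩
  rcases h2step w ya za hR with ⟨i, hsim⟩ | ⟨i, hsim⟩ | ⟨i, j, hij, hsim⟩
  · exact absurd ((hya i).symm.trans (Quotient.sound ((hs (ya i) w).2 ⟨hsim.2, hsim.1⟩)) : y i = Quotient.mk s w) (h i).2.2.1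
  · exact absurd ((hya i).symm.trans ((Quotient.sound ((hs (ya i) (za i)).2 hsim)).trans (hza i))) (h i).2.2.2
  · exact ⟨i, j, hij, ((hza i).symm.trans ((Quotient.sound ((hs (za i) (za j)).2 hsim)).trans (hza j)))⟩
end

section
/- Let P be a set of propositional variables and M=(W,R,π) a reflexive Kripke model satisfying φ~_eq, such that ~ respects P in M (i.e., w~w' implies that each p∈P is true at w iff true at w'). Then for every world w and every modal formula ψ with all variables in P: M,w ⊨ ψ if and only if M/~,[w] ⊨ ψ, where M/~ is the quotient model with variable p∈P true at [w] iff true at all elements of [w]. -/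
/-- Modal formulas over propositional variables indexed by `ℕ`. -/
inductive MF : Type
  | var : ℕ → MF
  | neg : MF → MF
  | and : MF → MF → MF
  | box : MF → MF

/-- Kripke semantics: `MF.sat R π w φ` means `M, w ⊨ φ` in the model `M = (W, R, π)`. -/
def MF.sat {W : Type} (R : W → W → Prop) (π : ℕ → W → Prop) : W → MF → Prop
  | w, .var p => π p w
  | w, .neg φ => ¬ MF.sat R π w φ
  | w, .and φ ψ => MF.sat R π w φ ∧ MF.sat R π w ψ
  | w, .box φ => ∀ w', R w w' → MF.sat R π w' φ

/-- The set of propositional variables occurring in a modal formula. -/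
def MF.vars : MF → Set ℕ
  | .var p => {p}
  | .neg φ => φ.vars
  | .and φ ψ => φ.vars ∪ ψ.vars
  | .box φ => φ.vars

/-- Let `M = (W, R, π)` be a reflexive `φ~_eq`-model such that `~` respects `P`.
Then for every world `w` and modal formula `ψ` with variables in `P`:
`M, w ⊨ ψ` iff `M/~, [w] ⊨ ψ`. -/
theorem abstraction_preserves_modal_truth {W : Type}
    (R : W → W → Prop) (π : ℕ → W → Prop) (P : Set ℕ)
    (hrefl : ∀ x, R x x)
    (heq : ∀ x y z : W,
      (sim R x y ∧ R y z → R x z) ∧ (sim R x y ∧ R z y → R z x))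
    -- `~` respects `P`:
    (hresp : ∀ w w' : W, sim R w w' → ∀ p ∈ P, (π p w ↔ π p w'))
    -- the quotient by `~`:
    (s : Setoid W) (hs : ∀ x y, s.r x y ↔ sim R x y)
    -- the (well-defined) quotient relation `R/~`:
    (Rq : Quotient s → Quotient s → Prop)
    (hRq : ∀ w w' : W, Rq (Quotient.mk s w) (Quotient.mk s w') ↔ R w w')
    -- the quotient valuation: `p ∈ P` is true at `[w]` iff true at all elements of
    -- `[w]`; variables not in `P` are false everywhere:
    (πq : ℕ → Quotient s → Prop)
    (hπq : ∀ (p : ℕ) (w : W),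
      πq p (Quotient.mk s w) ↔ (p ∈ P ∧ ∀ v : W, sim R v w → π p v)) :
    ∀ (ψ : MF), MF.vars ψ ⊆ P →
      ∀ w : W, (MF.sat R π w ψ ↔ MF.sat Rq πq (Quotient.mk s w) ψ) := by
  intro ψ
  induction ψ with
  | var p =>
    intro hsub w
    have hp : p ∈ P := hsub rfl
    rw [MF.sat, MF.sat, hπq]
    constructor
    · intro h
      exact ⟨hp, fun v hv => (hresp v w hv p hp).mpr h⟩
    · intro ⟨_, h⟩
      exact h w ⟨hrefl w, hrefl w⟩
  | neg φ ih =>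
    intro hsub w
    exact not_congr (ih hsub w)
  | and φ χ ih1 ih2 =>
    intro hsub w
    exact and_congr (ih1 (fun x hx => hsub (Or.inl hx)) w)
      (ih2 (fun x hx => hsub (Or.inr hx)) w)
  | box φ ih =>
    intro hsub w
    constructor
    · intro h q hq
      induction q using Quotient.ind with
      | _ v => exact (ih hsub v).mp (h v ((hRq w v).mp hq))
    · intro h v hv
      exact (ih hsub v).mpr (h _ ((hRq w v).mpr hv))
end

section
/- Let M=(W,R,π) be a reflexive Kripke model satisfying φ_grid, and suppose M globally satisfies ψ^P_resp. Then ~ respects P∪{d₈} in M: whenever w~w' (i.e., wRw' and w'Rw), the worlds w and w' assign the same truth value to d₈ (as a value in Z/8) and to every variable p∈P. -/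
/-- Let `M` be a reflexive `φ_grid`-model that globally satisfies `ψ^P_resp`
(stated semantically: along every edge the `d₈`-value stays or increases by 2 or 3
mod 8, and variables `p ∈ P` are preserved along edges between worlds of equal
`d₈`-value).  Then `~` respects `P ∪ {d₈}`: `~`-equivalent worlds share the same
`d₈`-value and the same truth values of all variables in `P`. -/
theorem resp_formula_forces_sim_respects_P {W : Type}
    (R : W → W → Prop) (π : ℕ → W → Prop) (d8 : W → ZMod 8) (P : Set ℕ)
    (hrefl : ∀ x, R x x)
    -- φ_1-step:
    (h1step : ∀ x y₁ y₂ y₃ : W, R x y₁ → R x y₂ → R x y₃ →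
      sim R x y₁ ∨ sim R x y₂ ∨ sim R x y₃ ∨
      sim R y₁ y₂ ∨ sim R y₁ y₃ ∨ sim R y₂ y₃)
    -- φ_2-step:
    (h2step : ∀ (x : W) (y z : Fin 4 → W),
      (∀ i, R x (y i) ∧ R (y i) (z i)) →
      (∃ i, sim R x (y i)) ∨ (∃ i, sim R (y i) (z i)) ∨
      (∃ i j, i < j ∧ sim R (z i) (z j)))
    -- φ~_eq:
    (heq : ∀ x y z : W,
      (sim R x y ∧ R y z → R x z) ∧ (sim R x y ∧ R z y → R z x))
    -- `M` globally satisfies `ψ^P_resp`: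
    (hresp : ∀ w w' : W, R w w' →
      (d8 w' = d8 w ∨ d8 w' = d8 w + 2 ∨ d8 w' = d8 w + 3) ∧
      ∀ p ∈ P, (π p w → d8 w' = d8 w → π p w') ∧
               (¬ π p w → d8 w' = d8 w → ¬ π p w')) :
    ∀ w w' : W, sim R w w' →
      d8 w = d8 w' ∧ ∀ p ∈ P, (π p w ↔ π p w') := by
  intro w w' ⟨h1, h2⟩
  obtain ⟨hd1, hp1⟩ := hresp w w' h1
  obtain ⟨hd2, hp2⟩ := hresp w' w h2
  have hd : d8 w = d8 w' := by
    rcases hd1 with h | h | h <;> rcases hd2 with h' | h' | h' <;>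
      first | (exact h.symm) | (rw [h] at h'; simp only [add_assoc, left_eq_add] at h'; exact absurd h' (by decide))
  refine ⟨hd, fun p hp => ?_⟩
  obtain ⟨ha, hb⟩ := hp1 p hp
  obtain ⟨ha', hb'⟩ := hp2 p hp
  constructor
  · intro h; exact ha h hd.symm
  · intro h; by_contra hc; exact hb hc hd.symm h
end

section
/- Let M be a grid model globally satisfying a modal formula ψ with md(ψ)≤1, and let M̂ be obtained from M by adding all reflexive edges and setting d₈((i,j)) = 3i+2j mod 8. Then M̂ is a reflexive model satisfying φ_grid, globally satisfying ψ^P_resp and ψ^succ, and for every subformula χ of ψ and all (i,j): M,(i,j)⊨χ iff M̂,(i,j)⊨g(χ), where g replaces each □ξ by ⋀_{d=0}^{7}((d₈=d) → □((d₈≠d) → g(ξ))). -/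
/-- Modal formulas with propositional variables and atoms `d₈ = d` (for `d : ZMod 8`,
encoding the three propositional variables `d₈ᵃ, d₈ᵇ, d₈ᶜ` of the paper). -/
inductive MF8 : Type
  | var : ℕ → MF8
  | d8eq : ZMod 8 → MF8
  | neg : MF8 → MF8
  | and : MF8 → MF8 → MF8
  | or : MF8 → MF8 → MF8
  | imp : MF8 → MF8 → MF8
  | box : MF8 → MF8

/-- Kripke semantics on a model `(W, R, π)` additionally carrying a `d₈`-labelling. -/
def MF8.sat {W : Type} (R : W → W → Prop) (π : ℕ → W → Prop) (d8 : W → ZMod 8) :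
    W → MF8 → Prop
  | w, .var p => π p w
  | w, .d8eq d => d8 w = d
  | w, .neg φ => ¬ MF8.sat R π d8 w φ
  | w, .and φ ψ => MF8.sat R π d8 w φ ∧ MF8.sat R π d8 w ψ
  | w, .or φ ψ => MF8.sat R π d8 w φ ∨ MF8.sat R π d8 w ψ
  | w, .imp φ ψ => MF8.sat R π d8 w φ → MF8.sat R π d8 w ψ
  | w, .box φ => ∀ w', R w w' → MF8.sat R π d8 w' φ

/-- Modal depth. -/
def MF8.md : MF8 → ℕ
  | .var _ => 0
  | .d8eq _ => 0
  | .neg φ => φ.md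
  | .and φ ψ => max φ.md ψ.md
  | .or φ ψ => max φ.md ψ.md
  | .imp φ ψ => max φ.md ψ.md
  | .box φ => φ.md + 1

/-- The propositional variables of a formula. -/
def MF8.vars : MF8 → Set ℕ
  | .var p => {p}
  | .d8eq _ => ∅
  | .neg φ => φ.vars
  | .and φ ψ => φ.vars ∪ ψ.vars
  | .or φ ψ => φ.vars ∪ ψ.vars
  | .imp φ ψ => φ.vars ∪ ψ.vars
  | .box φ => φ.vars

/-- A plain modal formula: no `d₈`-atoms occur. -/
def MF8.plain : MF8 → Prop
  | .var _ => True
  | .d8eq _ => False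
  | .neg φ => φ.plain
  | .and φ ψ => φ.plain ∧ ψ.plain
  | .or φ ψ => φ.plain ∧ ψ.plain
  | .imp φ ψ => φ.plain ∧ ψ.plain
  | .box φ => φ.plain

/-- Subformula relation. -/
inductive MF8.Sub : MF8 → MF8 → Prop
  | refl (φ : MF8) : MF8.Sub φ φ
  | neg {χ φ : MF8} : MF8.Sub χ φ → MF8.Sub χ (.neg φ)
  | andl {χ φ ψ : MF8} : MF8.Sub χ φ → MF8.Sub χ (.and φ ψ)
  | andr {χ φ ψ : MF8} : MF8.Sub χ ψ → MF8.Sub χ (.and φ ψ)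
  | orl {χ φ ψ : MF8} : MF8.Sub χ φ → MF8.Sub χ (.or φ ψ)
  | orr {χ φ ψ : MF8} : MF8.Sub χ ψ → MF8.Sub χ (.or φ ψ)
  | impl {χ φ ψ : MF8} : MF8.Sub χ φ → MF8.Sub χ (.imp φ ψ)
  | impr {χ φ ψ : MF8} : MF8.Sub χ ψ → MF8.Sub χ (.imp φ ψ)
  | box {χ φ : MF8} : MF8.Sub χ φ → MF8.Sub χ (.box φ)

/-- Finite conjunction. -/
def bigConj : List MF8 → MF8
  | [] => .imp (.var 0) (.var 0)
  | φ :: l => .and φ (bigConj l)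

/-- The list `[0, 1, ..., 7]` as elements of `ZMod 8`. -/
def allD8 : List (ZMod 8) := (List.range 8).map (fun k => (k : ZMod 8))

/-- The translation `g`: replaces `□ξ` by
`⋀_{d=0}^{7} ((d₈=d) → □((d₈≠d) → g(ξ)))`. -/
def gTrans : MF8 → MF8
  | .var p => .var p
  | .d8eq d => .d8eq d
  | .neg φ => .neg (gTrans φ)
  | .and φ ψ => .and (gTrans φ) (gTrans ψ)
  | .or φ ψ => .or (gTrans φ) (gTrans ψ)
  | .imp φ ψ => .imp (gTrans φ) (gTrans ψ)
  | .box φ => bigConj (allD8.map (fun d =>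
      .imp (.d8eq d) (.box (.imp (.neg (.d8eq d)) (gTrans φ)))))

/-- The grid frame on `ℕ × ℕ`. -/
def gridR : ℕ × ℕ → ℕ × ℕ → Prop :=
  fun a b => b = (a.1 + 1, a.2) ∨ b = (a.1, a.2 + 1)

/-- The reflexive closure of the grid frame. -/
def gridRhat : ℕ × ℕ → ℕ × ℕ → Prop := fun a b => gridR a b ∨ b = a

/-- The labelling `d₈(i,j) = 3i + 2j mod 8`. -/
def d8hat : ℕ × ℕ → ZMod 8 := fun a => 3 * (a.1 : ZMod 8) + 2 * (a.2 : ZMod 8)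

/-- Symmetric edge. -/
def simH (x y : ℕ × ℕ) : Prop := gridRhat x y ∧ gridRhat y x

/-! ### Auxiliary lemmas -/

lemma d8hat_right (a : ℕ × ℕ) : d8hat (a.1 + 1, a.2) = d8hat a + 3 := by
  simp [d8hat]; push_cast; ring

lemma d8hat_up (a : ℕ × ℕ) : d8hat (a.1, a.2 + 1) = d8hat a + 2 := by
  simp [d8hat]; push_cast; ring

lemma gridR_d8 {a b : ℕ × ℕ} (h : gridR a b) :
    d8hat b = d8hat a + 2 ∨ d8hat b = d8hat a + 3 := by
  rcases h with h | h <;> subst h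
  · exact Or.inr (d8hat_right a)
  · exact Or.inl (d8hat_up a)

lemma gridR_d8_ne {a b : ℕ × ℕ} (h : gridR a b) : d8hat b ≠ d8hat a := by
  rcases gridR_d8 h with h2 | h2 <;> rw [h2] <;> simp <;> decide

lemma gridR_sum {a b : ℕ × ℕ} (h : gridR a b) : b.1 + b.2 = a.1 + a.2 + 1 := by
  rcases h with h | h <;> subst h <;> simp <;> omega

lemma gridRhat_sum {a b : ℕ × ℕ} (h : gridRhat a b) :
    b.1 + b.2 = a.1 + a.2 + 1 ∨ b = a := by
  rcases h with h | h
  · exact Or.inl (gridR_sum h)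
  · exact Or.inr h

lemma simH_eq {a b : ℕ × ℕ} (h : simH a b) : b = a := by
  rcases h with ⟨h1, h2⟩
  rcases gridRhat_sum h1 with e1 | e1
  · rcases gridRhat_sum h2 with e2 | e2
    · omega
    · subst e2; omega
  · exact e1

lemma gridRhat_refl (w : ℕ × ℕ) : gridRhat w w := Or.inr rfl

lemma simH_refl (w : ℕ × ℕ) : simH w w := ⟨gridRhat_refl w, gridRhat_refl w⟩

lemma gridRhat_eq_of_d8 {a b : ℕ × ℕ} (h : gridRhat a b) (hd : d8hat b = d8hat a) :
    b = a := by
  rcases h with h | h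
  · exact absurd hd (gridR_d8_ne h)
  · exact h

/-- Satisfaction of box-free formulas does not depend on the relation. -/
lemma sat_md_zero {W : Type} (R R' : W → W → Prop) (π : ℕ → W → Prop)
    (d8 : W → ZMod 8) (χ : MF8) (h : χ.md = 0) (w : W) :
    MF8.sat R π d8 w χ ↔ MF8.sat R' π d8 w χ := by
  induction χ generalizing w with
  | var p => simp [MF8.sat]
  | d8eq d => simp [MF8.sat]
  | neg φ ih => simp only [MF8.sat]; rw [ih h w]
  | and φ ψ' ihφ ihψ =>
      simp only [MF8.md, Nat.max_eq_zero_iff] at h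
      simp only [MF8.sat]; rw [ihφ h.1 w, ihψ h.2 w]
  | or φ ψ' ihφ ihψ =>
      simp only [MF8.md, Nat.max_eq_zero_iff] at h
      simp only [MF8.sat]; rw [ihφ h.1 w, ihψ h.2 w]
  | imp φ ψ' ihφ ihψ =>
      simp only [MF8.md, Nat.max_eq_zero_iff] at h
      simp only [MF8.sat]; rw [ihφ h.1 w, ihψ h.2 w]
  | box φ ih => simp [MF8.md] at h

lemma gTrans_md_zero (χ : MF8) (h : χ.md = 0) : gTrans χ = χ := by
  induction χ with
  | var p => rfl
  | d8eq d => rfl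
  | neg φ ih => simp only [gTrans]; rw [ih h]
  | and φ ψ' ihφ ihψ =>
      simp only [MF8.md, Nat.max_eq_zero_iff] at h
      simp only [gTrans]; rw [ihφ h.1, ihψ h.2]
  | or φ ψ' ihφ ihψ =>
      simp only [MF8.md, Nat.max_eq_zero_iff] at h
      simp only [gTrans]; rw [ihφ h.1, ihψ h.2]
  | imp φ ψ' ihφ ihψ =>
      simp only [MF8.md, Nat.max_eq_zero_iff] at h
      simp only [gTrans]; rw [ihφ h.1, ihψ h.2]
  | box φ ih => simp [MF8.md] at h

lemma sat_bigConj {W : Type} (R : W → W → Prop) (π : ℕ → W → Prop)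
    (d8 : W → ZMod 8) (w : W) (l : List MF8) :
    MF8.sat R π d8 w (bigConj l) ↔ ∀ φ ∈ l, MF8.sat R π d8 w φ := by
  induction l with
  | nil => simp [bigConj, MF8.sat]
  | cons φ l ih => simp [bigConj, MF8.sat, ih]

lemma mem_allD8 (d : ZMod 8) : d ∈ allD8 := by
  revert d; decide

lemma sub_md_le {χ ψ : MF8} (h : MF8.Sub χ ψ) : χ.md ≤ ψ.md := by
  induction h with
  | refl => exact le_refl _
  | neg _ ih => exact ih
  | andl _ ih => exact ih.trans (le_max_left _ _)
  | andr _ ih => exact ih.trans (le_max_right _ _)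
  | orl _ ih => exact ih.trans (le_max_left _ _)
  | orr _ ih => exact ih.trans (le_max_right _ _)
  | impl _ ih => exact ih.trans (le_max_left _ _)
  | impr _ ih => exact ih.trans (le_max_right _ _)
  | box _ ih => exact ih.trans (Nat.le_succ_of_le (le_refl _))

/-- Main translation lemma. -/
lemma gTrans_sat (π : ℕ → ℕ × ℕ → Prop) (χ : MF8) (h : χ.md ≤ 1) (w : ℕ × ℕ) :
    MF8.sat gridR π d8hat w χ ↔ MF8.sat gridRhat π d8hat w (gTrans χ) := by
  induction χ generalizing w with
  | var p => simp [MF8.sat, gTrans]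
  | d8eq d => simp [MF8.sat, gTrans]
  | neg φ ih => simp only [MF8.sat, gTrans]; rw [ih h w]
  | and φ ψ' ihφ ihψ =>
      simp only [MF8.md, max_le_iff] at h
      simp only [MF8.sat, gTrans]; rw [ihφ h.1 w, ihψ h.2 w]
  | or φ ψ' ihφ ihψ =>
      simp only [MF8.md, max_le_iff] at h
      simp only [MF8.sat, gTrans]; rw [ihφ h.1 w, ihψ h.2 w]
  | imp φ ψ' ihφ ihψ =>
      simp only [MF8.md, max_le_iff] at h
      simp only [MF8.sat, gTrans]; rw [ihφ h.1 w, ihψ h.2 w]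
  | box φ ih =>
      have hφ0 : φ.md = 0 := by simp [MF8.md] at h; omega
      rw [gTrans, gTrans_md_zero φ hφ0]
      rw [sat_bigConj]
      constructor
      · intro hbox ξ hξ
        simp only [List.mem_map] at hξ
        obtain ⟨d, _, rfl⟩ := hξ
        intro hd w' hww' hne
        simp only [MF8.sat] at hd hne ⊢
        rcases hww' with hR | heq
        · exact (sat_md_zero gridR gridRhat π d8hat φ hφ0 w').mp (hbox w' hR)
        · exact absurd (heq ▸ hd) hne
      · intro hall w' hR
        have hmem : (MF8.imp (.d8eq (d8hat w))
            (.box (.imp (.neg (.d8eq (d8hat w))) φ))) ∈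
            allD8.map (fun d => MF8.imp (.d8eq d)
              (.box (.imp (.neg (.d8eq d)) φ))) :=
          List.mem_map.mpr ⟨d8hat w, mem_allD8 _, rfl⟩
        have := hall _ hmem rfl w' (Or.inl hR) (gridR_d8_ne hR)
        exact (sat_md_zero gridR gridRhat π d8hat φ hφ0 w').mpr this

/-- If the grid model `M = (ℕ×ℕ, gridR, π)` globally satisfies a plain modal
formula `ψ` of modal depth `≤ 1`, then the model `M̂` (reflexive closure of the
grid, with `d₈(i,j) = 3i+2j mod 8`) is a reflexive `φ_grid`-model, globally
satisfies `ψ^P_resp` and `ψ^succ` (with `P = var ψ`), and for every subformula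
`χ` of `ψ` and every world `w`: `M, w ⊨ χ` iff `M̂, w ⊨ g(χ)`. -/
theorem grid_to_reflexive_grid_model (π : ℕ → ℕ × ℕ → Prop) (ψ : MF8)
    (hplain : MF8.plain ψ) (hmd : MF8.md ψ ≤ 1)
    (hglob : ∀ w : ℕ × ℕ, MF8.sat gridR π d8hat w ψ) :
    -- M̂ is reflexive:
    (∀ w, gridRhat w w) ∧
    -- M̂ satisfies φ_1-step:
    (∀ x y₁ y₂ y₃ : ℕ × ℕ, gridRhat x y₁ → gridRhat x y₂ → gridRhat x y₃ →
      simH x y₁ ∨ simH x y₂ ∨ simH x y₃ ∨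
      simH y₁ y₂ ∨ simH y₁ y₃ ∨ simH y₂ y₃) ∧
    -- M̂ satisfies φ_2-step:
    (∀ (x : ℕ × ℕ) (y z : Fin 4 → ℕ × ℕ),
      (∀ i, gridRhat x (y i) ∧ gridRhat (y i) (z i)) →
      (∃ i, simH x (y i)) ∨ (∃ i, simH (y i) (z i)) ∨
      (∃ i j, i < j ∧ simH (z i) (z j))) ∧
    -- M̂ satisfies φ~_eq:
    (∀ x y z : ℕ × ℕ,
      (simH x y ∧ gridRhat y z → gridRhat x z) ∧
      (simH x y ∧ gridRhat z y → gridRhat z x)) ∧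
    -- M̂ globally satisfies ψ^P_resp (semantically, with P = vars ψ):
    (∀ w w' : ℕ × ℕ, gridRhat w w' →
      (d8hat w' = d8hat w ∨ d8hat w' = d8hat w + 2 ∨ d8hat w' = d8hat w + 3) ∧
      ∀ p ∈ MF8.vars ψ,
        (π p w → d8hat w' = d8hat w → π p w') ∧
        (¬ π p w → d8hat w' = d8hat w → ¬ π p w')) ∧
    -- M̂ globally satisfies ψ^succ:
    (∀ w : ℕ × ℕ,
      (∃ w₁, gridRhat w w₁ ∧ d8hat w₁ = d8hat w + 2) ∧
      (∃ w₂, gridRhat w w₂ ∧ d8hat w₂ = d8hat w + 3)) ∧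
    -- truth of subformulas is preserved by the translation g:
    (∀ χ : MF8, MF8.Sub χ ψ → ∀ w : ℕ × ℕ,
      MF8.sat gridR π d8hat w χ ↔ MF8.sat gridRhat π d8hat w (gTrans χ)) := by
  refine ⟨gridRhat_refl, ?_, ?_, ?_, ?_, ?_, ?_⟩
  · -- φ_1-step
    intro x y₁ y₂ y₃ h₁ h₂ h₃
    rcases h₁ with (rfl | rfl) | rfl <;> rcases h₂ with (rfl | rfl) | rfl <;>
      rcases h₃ with (rfl | rfl) | rfl <;> simp [simH_refl]
  · -- φ_2-step
    intro x y z h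
    by_cases hy : ∃ i, y i = x
    · obtain ⟨i, hi⟩ := hy
      exact Or.inl ⟨i, hi ▸ simH_refl x⟩
    · push_neg at hy
      have hyR : ∀ i, gridR x (y i) := by
        intro i; rcases (h i).1 with hR | heq
        · exact hR
        · exact absurd heq (hy i)
      by_cases hz : ∃ i, z i = y i
      · obtain ⟨i, hi⟩ := hz
        exact Or.inr (Or.inl ⟨i, hi ▸ simH_refl (y i)⟩)
      · push_neg at hz
        have hzR : ∀ i, gridR (y i) (z i) := by
          intro i; rcases (h i).2 with hR | heq
          · exact hR
          · exact absurd heq (hz i)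
        have key : ∀ i, z i = (x.1 + 2, x.2) ∨ z i = (x.1 + 1, x.2 + 1) ∨
            z i = (x.1, x.2 + 2) := by
          intro i
          rcases hyR i with hy1 | hy1 <;> rcases hzR i with hz1 | hz1 <;>
            rw [hz1, hy1] <;> simp
        have hinj : ∀ i j, (z i).1 = (z j).1 → z i = z j := by
          intro i j hij
          rcases key i with h1 | h1 | h1 <;> rcases key j with h2 | h2 | h2 <;>
            rw [h1, h2] at hij ⊢ <;> simp_all <;> omega
        have : ∃ i j : Fin 4, i ≠ j ∧
            (fun i => (if (z i).1 = x.1 then (0 : Fin 3) else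
              if (z i).1 = x.1 + 1 then 1 else 2)) i =
            (fun i => (if (z i).1 = x.1 then (0 : Fin 3) else
              if (z i).1 = x.1 + 1 then 1 else 2)) j := by
          obtain ⟨i, j, hne, heq⟩ :=
            Fintype.exists_ne_map_eq_of_card_lt
              (fun i : Fin 4 => (if (z i).1 = x.1 then (0 : Fin 3) else
                if (z i).1 = x.1 + 1 then 1 else 2)) (by simp)
          exact ⟨i, j, hne, heq⟩
        obtain ⟨i, j, hne, heq⟩ := this
        have hzz : z i = z j := by
          apply hinj
          simp only at heq
          rcases key i with h1 | h1 | h1 <;> rcases key j with h2 | h2 | h2 <;>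
            rw [h1, h2] <;> rw [h1, h2] at heq <;> simp_all <;> omega
        refine Or.inr (Or.inr ?_)
        rcases lt_or_gt_of_ne hne with hlt | hlt
        · exact ⟨i, j, hlt, hzz ▸ simH_refl (z i)⟩
        · exact ⟨j, i, hlt, hzz ▸ simH_refl (z j)⟩
  · -- φ~_eq
    intro x y z
    constructor
    · rintro ⟨hs, hr⟩
      have := simH_eq hs; subst this; exact hr
    · rintro ⟨hs, hr⟩
      have := simH_eq hs; subst this; exact hr
  · -- ψ^P_resp
    intro w w' h
    constructor
    · rcases h with hR | rfl
      · exact Or.inr (gridR_d8 hR)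
      · exact Or.inl rfl
    · intro p _
      constructor
      · intro hπ hd
        have := gridRhat_eq_of_d8 h hd; subst this; exact hπ
      · intro hπ hd
        have := gridRhat_eq_of_d8 h hd; subst this; exact hπ
  · -- ψ^succ
    intro w
    exact ⟨⟨(w.1, w.2 + 1), Or.inl (Or.inr rfl), d8hat_up w⟩,
      ⟨(w.1 + 1, w.2), Or.inl (Or.inl rfl), d8hat_right w⟩⟩
  · -- translation
    intro χ hsub w
    exact gTrans_sat π χ ((sub_md_le hsub).trans hmd) w
end

section
/- Let M=(W,R,π) be a Kripke model whose frame satisfies φ_univ, and let w_u ∈ W with M,w_u ⊨ u ∧ □¬u. Then w_u is irreflexive, and for the submodel M̂ restricted to Ŵ={w : w_u R w} (with R and π restricted), M̂ is reflexive, and for every modal formula χ and every w∈Ŵ: M,w⊨χ iff M̂,w⊨χ. -/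
/-- Let `M = (W, R, π)` satisfy `φ_univ`, and let `w_u` satisfy `u ∧ □¬u`.  Then
`w_u` is irreflexive, the submodel `M̂` on `Ŵ = {w : w_u R w}` is reflexive, and
truth of every modal formula at every `w ∈ Ŵ` agrees between `M` and `M̂`. -/
theorem universal_world_submodel {W : Type}
    (R : W → W → Prop) (π : ℕ → W → Prop)
    (huniv : ∀ x y wu : W, (R x y → R y y) ∧ (¬ R wu wu → R x y → R wu y))
    (u : ℕ) (wu : W)
    (hsat : MF.sat R π wu (.and (.var u) (.box (.neg (.var u))))) :
    ¬ R wu wu ∧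
    (∀ a : {w : W // R wu w}, R a.1 a.1) ∧
    (∀ (χ : MF) (a : {w : W // R wu w}),
      MF.sat R π a.1 χ ↔
      MF.sat (fun x y : {w : W // R wu w} => R x.1 y.1)
        (fun p x => π p x.1) a χ) := by
  obtain ⟨hu, hbox⟩ := hsat
  have hirr : ¬ R wu wu := fun h => hbox wu h hu
  refine ⟨hirr, fun a => (huniv wu a.1 wu).1 a.2, fun χ => ?_⟩
  induction χ with
  | var p => intro a; rfl
  | neg φ ih => intro a; simp only [MF.sat]; exact not_congr (ih a)
  | and φ ψ ih1 ih2 => intro a; exact and_congr (ih1 a) (ih2 a)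
  | box φ ih =>
    intro a
    constructor
    · intro h b hb; exact (ih b).1 (h b.1 hb)
    · intro h w' hw'
      have hw : R wu w' := (huniv a.1 w' wu).2 hirr hw'
      exact (ih ⟨w', hw⟩).2 (h ⟨w', hw⟩ hw')
end

section
/- Let ψ be globally satisfied in a reflexive φ_grid-model M. Adding a fresh universal world: define M̂ with worlds W∪{w_u} (w_u new), edges R ∪ {(w_u,w) : w∈W}, and valuation extending π with the fresh variable u true exactly at w_u. Then M̂ is based on a φ_final-frame and M̂, w_u ⊨ u ∧ □¬u ∧ □ψ. -/
/-- Quantifier-free formulas of the *basic* frame language (relation `R`, no equality). -/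
inductive BasicQF (n : ℕ) : Type
  | rel : Fin n → Fin n → BasicQF n
  | fls : BasicQF n
  | not : BasicQF n → BasicQF n
  | and : BasicQF n → BasicQF n → BasicQF n
  | or : BasicQF n → BasicQF n → BasicQF n

def BasicQF.eval {W : Type} (R : W → W → Prop) {n : ℕ} (v : Fin n → W) :
    BasicQF n → Prop
  | .rel i j => R (v i) (v j)
  | .fls => False
  | .not φ => ¬ BasicQF.eval R v φ
  | .and φ ψ => BasicQF.eval R v φ ∧ BasicQF.eval R v ψ
  | .or φ ψ => BasicQF.eval R v φ ∨ BasicQF.eval R v ψ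

/-- Adding a fresh universal world `w_u` (`none`) to `(W, R)`. -/
def addUniv {W : Type} (R : W → W → Prop) : Option W → Option W → Prop
  | some x, some y => R x y
  | none, some _ => True
  | _, none => False

/-- The extended valuation: the fresh variable `u` is true exactly at `w_u`; at the
new world `w_u` the remaining variables take arbitrary values `b`. -/
def addUnivVal {W : Type} (π : ℕ → W → Prop) (u : ℕ) (b : ℕ → Prop) :
    ℕ → Option W → Prop
  | p, some x => p ≠ u ∧ π p x
  | p, none => p = u ∨ (p ≠ u ∧ b p)

lemma eval_addUniv {W : Type} (R : W → W → Prop) {n : ℕ} (φ : BasicQF n)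
    (v : Fin n → W) : BasicQF.eval R v φ ↔ BasicQF.eval (addUniv R) (fun i => some (v i)) φ := by
  induction φ with
  | rel i j => rfl
  | fls => rfl
  | not φ ih => exact not_congr ih
  | and φ ψ ih1 ih2 => exact and_congr ih1 ih2
  | or φ ψ ih1 ih2 => exact or_congr ih1 ih2

lemma sat_addUniv {W : Type} (R : W → W → Prop) (π : ℕ → W → Prop) (u : ℕ) (b : ℕ → Prop)
    (φ : MF) (hu : u ∉ MF.vars φ) (w : W) :
    MF.sat R π w φ ↔ MF.sat (addUniv R) (addUnivVal π u b) (some w) φ := by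
  induction φ generalizing w with
  | var p =>
      simp only [MF.vars, Set.mem_singleton_iff] at hu
      simp [MF.sat, addUnivVal, Ne.symm hu]
  | neg φ ih =>
      exact not_congr (ih hu w)
  | and φ ψ ih1 ih2 =>
      simp only [MF.vars, Set.mem_union, not_or] at hu
      exact and_congr (ih1 hu.1 w) (ih2 hu.2 w)
  | box φ ih =>
      constructor
      · intro h w' hw'
        match w' with
        | some x => exact (ih hu x).1 (h x hw')
        | none => exact absurd hw' (by cases hw')
      · intro h w' hw'
        exact (ih hu w').2 (h (some w') hw')

/-- Let `ψ` be globally satisfied in a reflexive `φ_grid`-model `M` (where `φ_grid`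
is the universal sentence with quantifier-free kernel `kernel`).  Adding a fresh
universal world `w_u` yields a model based on a `φ_final`-frame
(`φ_final = φ_univ ∧ φ_refl`) in which `w_u ⊨ u ∧ □¬u ∧ □ψ`. -/
theorem add_universal_world {W : Type}
    (R : W → W → Prop) (π : ℕ → W → Prop)
    {n : ℕ} (kernel : BasicQF n) (ψ : MF) (u : ℕ) (hu : u ∉ MF.vars ψ)
    (hrefl : ∀ x, R x x)
    (hgrid : ∀ v : Fin n → W, BasicQF.eval R v kernel)
    (hglob : ∀ w : W, MF.sat R π w ψ)
    (b : ℕ → Prop) :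
    -- M̂ satisfies φ_univ:
    (∀ x y wu : Option W,
      (addUniv R x y → addUniv R y y) ∧
      (¬ addUniv R wu wu → addUniv R x y → addUniv R wu y)) ∧
    -- M̂ satisfies φ_refl (the kernel relativized to reflexive worlds):
    (∀ v : Fin n → Option W,
      (∀ i, addUniv R (v i) (v i)) → BasicQF.eval (addUniv R) v kernel) ∧
    -- M̂, w_u ⊨ u ∧ □¬u ∧ □ψ:
    MF.sat (addUniv R) (addUnivVal π u b) none
      (.and (.var u) (.and (.box (.neg (.var u))) (.box ψ))) := by
  refine ⟨?_, ?_, ?_⟩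
  · intro x y wu
    constructor
    · intro h
      match x, y with
      | some x, some y => exact hrefl y
      | none, some y => exact hrefl y
    · intro hn h
      match wu with
      | none =>
          match x, y with
          | some x, some y => trivial
          | none, some y => trivial
      | some z => exact absurd (hrefl z) hn
  · intro v hv
    have : ∀ i, ∃ x, v i = some x := by
      intro i
      match h : v i with
      | some x => exact ⟨x, rfl⟩
      | none => exact absurd (h ▸ hv i) (by simp [addUniv])
    choose f hf using this
    have := (eval_addUniv R kernel f).1 (hgrid f)
    have hve : (fun i => some (f i)) = v := funext fun i => (hf i).symm
    rwa [hve] at this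
  · refine ⟨Or.inl rfl, ?_, ?_⟩
    · intro w' hw'
      match w' with
      | some x =>
          intro hc
          exact hc.1 rfl
      | none => cases hw'
    · intro w' hw'
      match w' with
      | some x => exact (sat_addUniv R π u b ψ hu x).1 (hglob x)
      | none => cases hw'
end

section
/- Let M be a φ_final-model with a world w_u such that M,w_u ⊨ u∧□¬u∧□ψ. Then the submodel on Ŵ={w : w_u R w} is a reflexive φ_grid-model that globally satisfies ψ. -/

lemma eval_sub {W : Type} (R : W → W → Prop) (S : W → Prop) {n : ℕ}
    (v : Fin n → {w : W // S w}) (φ : BasicQF n) :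
    BasicQF.eval (fun x y : {w : W // S w} => R x.1 y.1) v φ ↔
      BasicQF.eval R (fun i => (v i).1) φ := by
  induction φ with
  | rel i j => exact Iff.rfl
  | fls => exact Iff.rfl
  | not φ ih => exact not_congr ih
  | and φ ψ ih1 ih2 => exact and_congr ih1 ih2
  | or φ ψ ih1 ih2 => exact or_congr ih1 ih2

lemma sat_sub {W : Type} (R : W → W → Prop) (π : ℕ → W → Prop) (S : W → Prop)
    (hcl : ∀ x y, S x → R x y → S y) (φ : MF) :
    ∀ a : {w : W // S w},
      MF.sat (fun x y : {w : W // S w} => R x.1 y.1) (fun p x => π p x.1) a φ ↔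
        MF.sat R π a.1 φ := by
  induction φ with
  | var p => intro a; exact Iff.rfl
  | neg φ ih => intro a; exact not_congr (ih a)
  | and φ ψ ih1 ih2 => intro a; exact and_congr (ih1 a) (ih2 a)
  | box φ ih =>
    intro a
    constructor
    · intro h w' hr
      exact (ih ⟨w', hcl a.1 w' a.2 hr⟩).mp (h ⟨w', hcl a.1 w' a.2 hr⟩ hr)
    · intro h b hr
      exact (ih b).mpr (h b.1 hr)

/-- Let `M` be a `φ_final`-model (`φ_final = φ_univ ∧ φ_refl`, where `φ_refl`
relativizes the quantifier-free kernel of `φ_grid` to reflexive worlds) with a world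
`w_u` such that `M, w_u ⊨ u ∧ □¬u ∧ □ψ` (and `u` not occurring in `ψ`).  Then the
submodel on `Ŵ = {w : w_u R w}` is a reflexive `φ_grid`-model globally
satisfying `ψ`. -/
theorem final_model_gives_global_grid_model {W : Type}
    (R : W → W → Prop) (π : ℕ → W → Prop)
    {n : ℕ} (kernel : BasicQF n) (ψ : MF) (u : ℕ) (hu : u ∉ MF.vars ψ)
    -- φ_univ:
    (huniv : ∀ x y wu : W, (R x y → R y y) ∧ (¬ R wu wu → R x y → R wu y))
    -- φ_refl:
    (hreflkernel : ∀ v : Fin n → W, (∀ i, R (v i) (v i)) → BasicQF.eval R v kernel)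
    (wu : W)
    (hsat : MF.sat R π wu
      (.and (.var u) (.and (.box (.neg (.var u))) (.box ψ)))) :
    -- the submodel on Ŵ is reflexive:
    (∀ a : {w : W // R wu w}, R a.1 a.1) ∧
    -- it is a φ_grid-frame (satisfies the kernel universally):
    (∀ v : Fin n → {w : W // R wu w},
      BasicQF.eval (fun x y : {w : W // R wu w} => R x.1 y.1) v kernel) ∧
    -- it globally satisfies ψ:
    (∀ a : {w : W // R wu w},
      MF.sat (fun x y : {w : W // R wu w} => R x.1 y.1)
        (fun p x => π p x.1) a ψ) := by
  obtain ⟨hwu, hboxnu, hboxψ⟩ := hsat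
  have hnwuwu : ¬ R wu wu := fun h => hboxnu wu h hwu
  have hrefl : ∀ a : {w : W // R wu w}, R a.1 a.1 :=
    fun a => (huniv wu a.1 wu).1 a.2
  have hcl : ∀ x y, R wu x → R x y → R wu y :=
    fun x y _ hxy => (huniv x y wu).2 hnwuwu hxy
  refine ⟨hrefl, ?_, ?_⟩
  · intro v
    exact (eval_sub R (R wu) v kernel).mpr
      (hreflkernel (fun i => (v i).1) (fun i => hrefl (v i)))
  · intro a
    exact (sat_sub R π (R wu) hcl ψ a).mpr (hboxψ a.1 a.2)
end

section
/- Truth of a modal formula at a world is invariant under bounded-morphism unfolding of a grid-like labeled graph into the grid: if every vertex v of a reflexive-edge-free model M⁰ has unique successors v^↑, v^→ with v^{↑→}=v^{→↑}, then the unfolding M_grid with worlds N×N defined by (0,0)↦v₀, (i+1,j)↦((i,j)-image)^→, (i,j+1)↦((i,j)-image)^↑ (consistently) is a grid model, and for every modal formula χ and all (i,j): M_grid,(i,j)⊨χ iff M⁰,h(i,j)⊨χ, where h is the unfolding map. -/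
/-- Unfolding a grid-like labelled graph into the grid preserves modal truth:
if every vertex `v` of `M⁰` has exactly the two successors `up v` and `rt v`
(distinct from `v` and from each other) and the confluence `rt (up v) = up (rt v)`
holds, and `h : ℕ×ℕ → V` is the unfolding map (`h(0,0) = v₀`,
`h(i+1,j) = rt (h(i,j))`, `h(i,j+1) = up (h(i,j))`), then the grid model with
valuation pulled back along `h` satisfies exactly the same modal formulas at
`(i,j)` as `M⁰` does at `h(i,j)`. -/
theorem unfolding_preserves_modal_truth {V : Type}
    (R0 : V → V → Prop) (π0 : ℕ → V → Prop) (up rt : V → V)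
    (hupR : ∀ v, R0 v (up v)) (hrtR : ∀ v, R0 v (rt v))
    (hupne : ∀ v, up v ≠ v) (hrtne : ∀ v, rt v ≠ v)
    (hne : ∀ v, up v ≠ rt v)
    (honly : ∀ v w, R0 v w → w = up v ∨ w = rt v)
    (hconf : ∀ v, rt (up v) = up (rt v))
    (v₀ : V) (h : ℕ × ℕ → V)
    (h00 : h (0, 0) = v₀)
    (hrtstep : ∀ i j : ℕ, h (i + 1, j) = rt (h (i, j)))
    (hupstep : ∀ i j : ℕ, h (i, j + 1) = up (h (i, j))) :
    ∀ (χ : MF) (w : ℕ × ℕ),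
      MF.sat gridR (fun p a => π0 p (h a)) w χ ↔ MF.sat R0 π0 (h w) χ := by
  intro χ
  induction χ with
  | var p => intro w; rfl
  | neg φ ih => intro w; simp only [MF.sat]; rw [ih]
  | and φ ψ ih1 ih2 => intro w; simp only [MF.sat]; rw [ih1, ih2]
  | box φ ih =>
    intro w
    simp only [MF.sat]
    constructor
    · intro H u hu
      rcases honly _ _ hu with rfl | rfl
      · have := H (w.1, w.2 + 1) (Or.inr rfl)
        rwa [ih, hupstep] at this
      · have := H (w.1 + 1, w.2) (Or.inl rfl)
        rwa [ih, hrtstep] at this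
    · intro H w' hw'
      rw [ih]
      rcases hw' with rfl | rfl
      · rw [hrtstep]; exact H _ (hrtR _)
      · rw [hupstep]; exact H _ (hupR _)
end
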